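/- For every integer n ≥ 4 and every φ ∈ [π/4, π/2), |W'(φ)/W(φ)| < 4/5, where W(φ) = S_n/4 + cos φ/√(1 + n sin²φ) and S_n = Σ_{k=1}^{n-1} csc(πk/n). -/

import Mathlib

/-! Differentiating gives `W'(φ)² = (n+1)² x / (1 + n x)³` with `x = sin² φ ∈ [1/2, 1]`, and
`x / (1 + n x)³` decreases on `x ≥ 1/2`, so `W'(φ)² ≤ 4(n+1)²/(n+2)³`. Since `cos φ ≥ 0`,
`W(φ) ≥ S_n/4`, and it remains to check `100(n+1)² < S_n² (n+2)³`: for `n ≥ 5` this follows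
from `S_n ≥ n - 1` (every cosecant is at least `1`), and for `n = 4` from `S_4 = 1 + 2√2`. -/

open Real Finset

noncomputable def Ssum (n : ℕ) : ℝ := ∑ k ∈ Finset.Icc 1 (n - 1), 1 / Real.sin (π * k / n)

noncomputable def Wpyr (n : ℕ) (φ : ℝ) : ℝ :=
  Ssum n / 4 + Real.cos φ / Real.sqrt (1 + n * Real.sin φ ^ 2)

lemma one_le_one_div_sin {x : ℝ} (h0 : 0 < x) (hπ : x < π) : 1 ≤ 1 / sin x :=
  one_le_one_div (sin_pos_of_pos_of_lt_pi h0 hπ) (sin_le_one x)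

lemma sub_one_le_Ssum (n : ℕ) : (n : ℝ) - 1 ≤ Ssum n := by
  rcases Nat.eq_zero_or_pos n with rfl | hn
  · simp [Ssum]
  have hterm : ∀ k ∈ Icc 1 (n - 1), (1 : ℝ) ≤ 1 / sin (π * k / n) := by
    intro k hk
    have hk1 : (1 : ℝ) ≤ k := by exact_mod_cast (mem_Icc.1 hk).1
    have hkn : (k : ℝ) < n := by exact_mod_cast (show k < n by grind)
    apply one_le_one_div_sin
    · positivity
    · rw [div_lt_iff₀ (by positivity)]; nlinarith [pi_pos]
  have := card_nsmul_le_sum _ _ 1 hterm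
  rwa [Nat.card_Icc, nsmul_one, Nat.add_sub_cancel, Nat.cast_sub hn, Nat.cast_one] at this

lemma Ssum_four : Ssum 4 = 1 + 2 * √2 := by
  have h1 : π * ((1 : ℕ) : ℝ) / ((4 : ℕ) : ℝ) = π / 4 := by push_cast; ring
  have h2 : π * ((2 : ℕ) : ℝ) / ((4 : ℕ) : ℝ) = π / 2 := by push_cast; ring
  have h3 : π * ((3 : ℕ) : ℝ) / ((4 : ℕ) : ℝ) = π - π / 4 := by push_cast; ring
  rw [Ssum, show Icc 1 (4 - 1) = {1, 2, 3} by decide, sum_insert (by decide),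
    sum_insert (by decide), sum_singleton, h1, h2, h3, sin_pi_sub, sin_pi_div_four,
    sin_pi_div_two]
  field_simp
  linear_combination (-2) * sq_sqrt zero_le_two

lemma lt_Ssum_sq_mul {n : ℕ} (hn : 4 ≤ n) : 100 * (n + 1) ^ 2 < Ssum n ^ 2 * (n + 2) ^ 3 := by
  obtain rfl | hn5 := hn.eq_or_lt
  · have h2 : (1.4 : ℝ) ≤ √2 := by rw [le_sqrt (by norm_num) zero_le_two]; norm_num
    rw [Ssum_four]
    norm_num
    nlinarith
  have hn5 : (5 : ℝ) ≤ n := by exact_mod_cast hn5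
  have hS : (n - 1 : ℝ) ^ 2 ≤ Ssum n ^ 2 := pow_le_pow_left₀ (by linarith) (sub_one_le_Ssum n) 2
  have hy : (0 : ℝ) ≤ n - 5 := by linarith
  calc 100 * ((n : ℝ) + 1) ^ 2 < (n - 1) ^ 2 * (n + 2) ^ 3 := by
        nlinarith [pow_nonneg hy 2, pow_nonneg hy 3, pow_nonneg hy 4, pow_nonneg hy 5]
    _ ≤ Ssum n ^ 2 * (n + 2) ^ 3 := by gcongr

lemma Ssum_div_four_le_Wpyr (n : ℕ) {φ : ℝ} (h : 0 ≤ cos φ) : Ssum n / 4 ≤ Wpyr n φ :=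
  le_add_of_nonneg_right (div_nonneg h (sqrt_nonneg _))

lemma hasDerivAt_Wpyr (n : ℕ) (φ : ℝ) :
    HasDerivAt (Wpyr n)
      (-((n + 1) * sin φ) / ((1 + n * sin φ ^ 2) * √(1 + n * sin φ ^ 2))) φ := by
  have hu : (0 : ℝ) < 1 + n * sin φ ^ 2 := by positivity
  have hsqrt := ((((hasDerivAt_sin φ).fun_pow 2).const_mul (n : ℝ)).const_add 1).sqrt hu.ne'
  refine (((hasDerivAt_cos φ).fun_div hsqrt (sqrt_pos.2 hu).ne').const_add
    (Ssum n / 4)).congr_deriv ?_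
  have hsq : √(1 + n * sin φ ^ 2) ^ 2 = 1 + n * sin φ ^ 2 := sq_sqrt hu.le
  have hD : √(1 + n * sin φ ^ 2) ≠ 0 := (sqrt_pos.2 hu).ne'
  generalize √(1 + n * sin φ ^ 2) = D at hD hsq ⊢
  field_simp
  linear_combination 2 * n * sin φ * (1 - sin φ ^ 2) * hsq -
    2 * n * sin φ * (1 + n * sin φ ^ 2) * sin_sq_add_cos_sq φ

lemma deriv_Wpyr_sq (n : ℕ) (φ : ℝ) :
    deriv (Wpyr n) φ ^ 2 = (n + 1) ^ 2 * (sin φ ^ 2 / (1 + n * sin φ ^ 2) ^ 3) := by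
  have hu : (0 : ℝ) ≤ 1 + n * sin φ ^ 2 := by positivity
  rw [(hasDerivAt_Wpyr n φ).deriv, div_pow, neg_pow_two, mul_pow, mul_pow, sq_sqrt hu]
  ring

lemma div_one_add_mul_cube_le {a x : ℝ} (ha : 1 ≤ a) (hx : 1 / 2 ≤ x) :
    x / (1 + a * x) ^ 3 ≤ 4 / (a + 2) ^ 3 := by
  rw [div_le_div_iff₀ (by positivity) (by positivity)]
  have hy : 0 ≤ x - 1 / 2 := by linarith
  nlinarith [mul_nonneg hy (sub_nonneg.2 ha), mul_nonneg (mul_nonneg hy hy) (by linarith : 0 ≤ a),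
    pow_nonneg hy 3, mul_nonneg (mul_nonneg hy hy) (by positivity : 0 ≤ a ^ 2),
    mul_nonneg hy (by positivity : 0 ≤ a ^ 2)]

lemma half_le_sin_sq {φ : ℝ} (h₁ : π / 4 ≤ φ) (h₂ : φ ≤ 3 * π / 4) : 1 / 2 ≤ sin φ ^ 2 := by
  have : cos (2 * φ) ≤ 0 := cos_nonpos_of_pi_div_two_le_of_le (by linarith) (by linarith)
  rw [sin_sq_eq_half_sub]
  linarith

lemma deriv_Wpyr_sq_le {n : ℕ} (hn : 1 ≤ n) {φ : ℝ} (h₁ : π / 4 ≤ φ) (h₂ : φ ≤ 3 * π / 4) :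
    deriv (Wpyr n) φ ^ 2 ≤ (n + 1) ^ 2 * (4 / (n + 2) ^ 3) := by
  rw [deriv_Wpyr_sq]
  exact mul_le_mul_of_nonneg_left (div_one_add_mul_cube_le (Nat.one_le_cast.2 hn) (half_le_sin_sq h₁ h₂)) (sq_nonneg _)

theorem ratio_lt (n : ℕ) (hn : 4 ≤ n) (φ : ℝ) (hφ : φ ∈ Set.Ico (π / 4) (π / 2)) :
    |deriv (Wpyr n) φ / Wpyr n φ| < 4 / 5 := by
  obtain ⟨h₁, h₂⟩ := hφ
  have hW : Ssum n / 4 ≤ Wpyr n φ :=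
    Ssum_div_four_le_Wpyr n (cos_nonneg_of_mem_Icc ⟨by linarith [pi_pos], h₂.le⟩)
  have hS : 0 < Ssum n := by
    linarith [sub_one_le_Ssum n, show (4 : ℝ) ≤ n by exact_mod_cast hn]
  have hWpos : 0 < Wpyr n φ := by linarith
  rw [abs_div, abs_of_pos hWpos, div_lt_iff₀ hWpos]
  refine abs_lt_of_sq_lt_sq ?_ (by positivity)
  have hn2 : (0 : ℝ) < (n + 2) ^ 3 := by positivity
  calc deriv (Wpyr n) φ ^ 2 ≤ (n + 1) ^ 2 * (4 / (n + 2) ^ 3) :=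
        deriv_Wpyr_sq_le (by omega) h₁ (by linarith [pi_pos])
    _ < (Ssum n / 5) ^ 2 := by
        rw [mul_div_assoc', div_lt_iff₀ hn2]
        linarith [lt_Ssum_sq_mul hn]
    _ ≤ (4 / 5 * Wpyr n φ) ^ 2 := by gcongr; linarith
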